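/- Let (λ_{±pq}) be the roots of λ² + g_{pq}² λ + (p²+q²) f_{pq}² = 0 where 0 < g_{pq}² ≤ G for all p,q and f_{pq}² ≥ c > 0. Then the set of eigenvalues {λ_{±pq}} has real parts bounded (Re λ ∈ [−G, 0)) and has no finite accumulation point in ℂ. -/

import Mathlib

open Filter Topology

/-- Roots of a monic quadratic form a finite set. -/
lemma quad_roots_finite (g k : ℂ) : {lam : ℂ | lam ^ 2 + g * lam + k = 0}.Finite := by
  have hP : (Polynomial.X ^ 2 + Polynomial.C g * Polynomial.X + Polynomial.C k : Polynomial ℂ) ≠ 0 := by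
    intro h
    have := congrArg (fun P => Polynomial.coeff P 2) h
    simp [Polynomial.coeff_X_pow, Polynomial.coeff_C] at this
  have := Polynomial.finite_setOf_isRoot hP
  refine this.subset ?_
  intro x hx
  simp only [Set.mem_setOf_eq, Polynomial.IsRoot, Polynomial.eval_add, Polynomial.eval_pow,
    Polynomial.eval_mul, Polynomial.eval_X, Polynomial.eval_C]
  exact hx

/-- The eigenvalues λ_{±pq}, roots of λ² + g_{pq}² λ + (p²+q²) f_{pq}² = 0 with
0 < g_{pq}² ≤ G and f_{pq}² ≥ c > 0, have real parts in [−G, 0) and the set of all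
eigenvalues has no finite accumulation point in ℂ. -/
theorem stmt_15 (gsq fsq : ℕ+ → ℕ+ → ℝ) (G c : ℝ) (hG : 0 < G) (hc : 0 < c)
    (hg : ∀ p q : ℕ+, 0 < gsq p q ∧ gsq p q ≤ G)
    (hf : ∀ p q : ℕ+, c ≤ fsq p q) :
    (∀ lam ∈ {lam : ℂ | ∃ p q : ℕ+,
        lam ^ 2 + (gsq p q : ℂ) * lam + (((p : ℕ) : ℂ) ^ 2 + ((q : ℕ) : ℂ) ^ 2) * (fsq p q : ℂ) = 0},
      -G ≤ lam.re ∧ lam.re < 0) ∧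
    ∀ z : ℂ, ¬ AccPt z (Filter.principal {lam : ℂ | ∃ p q : ℕ+,
        lam ^ 2 + (gsq p q : ℂ) * lam + (((p : ℕ) : ℂ) ^ 2 + ((q : ℕ) : ℂ) ^ 2) * (fsq p q : ℂ) = 0}) := by
  set S := {lam : ℂ | ∃ p q : ℕ+,
      lam ^ 2 + (gsq p q : ℂ) * lam + (((p : ℕ) : ℂ) ^ 2 + ((q : ℕ) : ℂ) ^ 2) * (fsq p q : ℂ) = 0}
    with hS
  constructor
  · rintro lam ⟨p, q, heq⟩
    obtain ⟨hg1, hg2⟩ := hg p q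
    have hfpq := hf p q
    set a := lam.re
    set b := lam.im
    have hm1 : (1 : ℝ) ≤ (p : ℕ) := by exact_mod_cast p.one_le
    have hm2 : (1 : ℝ) ≤ (q : ℕ) := by exact_mod_cast q.one_le
    have hk : (0 : ℝ) < (((p:ℕ):ℝ)^2 + ((q:ℕ):ℝ)^2) * fsq p q :=
      mul_pos (by positivity) (hc.trans_le hfpq)
    have hre : a^2 - b^2 + gsq p q * a + (((p:ℕ):ℝ)^2 + ((q:ℕ):ℝ)^2) * fsq p q = 0 := by
      have := congrArg Complex.re heq
      simpa [Complex.add_re, Complex.mul_re, Complex.mul_im, pow_two, Complex.ofReal_re,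
        Complex.ofReal_im, a, b] using this
    have him : 2 * a * b + gsq p q * b = 0 := by
      have := congrArg Complex.im heq
      simp [Complex.add_im, Complex.mul_re, Complex.mul_im, pow_two, Complex.ofReal_re,
        Complex.ofReal_im, a, b] at this
      linarith
    by_cases hb : b = 0
    · have hb2 : b ^ 2 = 0 := by rw [hb]; ring
      rw [hb2] at hre
      constructor
      · by_contra h
        push_neg at h
        have ha : a < -G := h
        have : 0 < a * (a + gsq p q) := by nlinarith
        nlinarith
      · by_contra h
        push_neg at h
        nlinarith
    · have ha : a = -(gsq p q) / 2 := by
        have : (2 * a + gsq p q) * b = 0 := by ring_nf; linarith [him]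
        rcases mul_eq_zero.mp this with h | h
        · linarith
        · exact absurd h hb
      constructor
      · rw [ha]; linarith
      · rw [ha]; linarith
  · intro z hacc
    set R := ‖z‖ + 1 with hR
    have hR0 : 0 < R := by positivity
    set N : ℕ := ⌈(R ^ 2 + G * R) / c⌉₊ with hN
    set A : Set ℕ+ := (fun x : ℕ+ => (x : ℕ)) ⁻¹' Set.Iic N with hA
    have hAfin : A.Finite := (Set.finite_Iic N).preimage (fun x _ y _ hxy => PNat.coe_injective hxy)
    set T : Set ℂ := ⋃ p ∈ A, ⋃ q ∈ A,
        {lam : ℂ | lam ^ 2 + (gsq p q : ℂ) * lam +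
          (((p : ℕ) : ℂ) ^ 2 + ((q : ℕ) : ℂ) ^ 2) * (fsq p q : ℂ) = 0} with hT
    have hTfin : T.Finite :=
      hAfin.biUnion fun p _ => hAfin.biUnion fun q _ => quad_roots_finite _ _
    -- key: S ∩ ball z 1 ⊆ T
    have hkey : S ∩ Metric.ball z 1 ⊆ T := by
      rintro lam ⟨⟨p, q, heq⟩, hball⟩
      have hlam : ‖lam‖ ≤ R := by
        have := mem_ball_iff_norm.mp hball
        have h2 : ‖lam‖ - ‖z‖ ≤ ‖lam - z‖ := norm_sub_norm_le _ _
        linarith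
      obtain ⟨hg1, hg2⟩ := hg p q
      have hfpq := hf p q
      have hmb : (((p:ℕ):ℝ)^2 + ((q:ℕ):ℝ)^2) * fsq p q ≤ R ^ 2 + G * R := by
        have heq2 : (((p:ℕ):ℂ)^2 + ((q:ℕ):ℂ)^2) * (fsq p q : ℂ) = -(lam ^ 2 + (gsq p q : ℂ) * lam) := by
          linear_combination heq
        have hnorm : ‖(((p:ℕ):ℂ)^2 + ((q:ℕ):ℂ)^2) * (fsq p q : ℂ)‖ ≤ R ^ 2 + G * R := by
          rw [heq2, norm_neg]
          calc ‖lam ^ 2 + (gsq p q : ℂ) * lam‖ ≤ ‖lam ^ 2‖ + ‖(gsq p q : ℂ) * lam‖ := norm_add_le _ _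
            _ = ‖lam‖ ^ 2 + gsq p q * ‖lam‖ := by
                rw [norm_pow, norm_mul, Complex.norm_real, Real.norm_of_nonneg hg1.le]
            _ ≤ R ^ 2 + G * R := by
                have h1 : ‖lam‖ ^ 2 ≤ R ^ 2 := by nlinarith [norm_nonneg lam]
                have h2 : gsq p q * ‖lam‖ ≤ G * R := by nlinarith [norm_nonneg lam]
                linarith
        have hcast : ‖(((p:ℕ):ℂ)^2 + ((q:ℕ):ℂ)^2) * (fsq p q : ℂ)‖
            = (((p:ℕ):ℝ)^2 + ((q:ℕ):ℝ)^2) * fsq p q := by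
          have : (((p:ℕ):ℂ)^2 + ((q:ℕ):ℂ)^2) * (fsq p q : ℂ)
              = (((((p:ℕ):ℝ)^2 + ((q:ℕ):ℝ)^2) * fsq p q : ℝ) : ℂ) := by
            push_cast; ring
          rw [this, Complex.norm_real, Real.norm_of_nonneg]
          nlinarith
        rw [hcast] at hnorm
        exact hnorm
      have hm1 : (1 : ℝ) ≤ (p : ℕ) := by exact_mod_cast p.one_le
      have hm2 : (1 : ℝ) ≤ (q : ℕ) := by exact_mod_cast q.one_le
      have hmc : (((p:ℕ):ℝ)^2 + ((q:ℕ):ℝ)^2) * c ≤ R ^ 2 + G * R := by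
        have : (((p:ℕ):ℝ)^2 + ((q:ℕ):ℝ)^2) * c ≤ (((p:ℕ):ℝ)^2 + ((q:ℕ):ℝ)^2) * fsq p q := by
          have : (0:ℝ) ≤ ((p:ℕ):ℝ)^2 + ((q:ℕ):ℝ)^2 := by positivity
          nlinarith
        linarith
      have e : (((p:ℕ):ℝ)^2 + ((q:ℕ):ℝ)^2) * c = ((p:ℕ):ℝ)^2 * c + ((q:ℕ):ℝ)^2 * c := by ring
      have hp2 : ((p:ℕ):ℝ) * c ≤ ((p:ℕ):ℝ)^2 * c :=
        mul_le_mul_of_nonneg_right (by nlinarith) hc.le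
      have hq2 : ((q:ℕ):ℝ) * c ≤ ((q:ℕ):ℝ)^2 * c :=
        mul_le_mul_of_nonneg_right (by nlinarith) hc.le
      have hp0 : (0:ℝ) ≤ ((p:ℕ):ℝ)^2 * c := mul_nonneg (sq_nonneg _) hc.le
      have hq0 : (0:ℝ) ≤ ((q:ℕ):ℝ)^2 * c := mul_nonneg (sq_nonneg _) hc.le
      have hpN : ((p:ℕ):ℝ) ≤ (R ^ 2 + G * R) / c := by
        rw [le_div_iff₀ hc]; linarith
      have hqN : ((q:ℕ):ℝ) ≤ (R ^ 2 + G * R) / c := by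
        rw [le_div_iff₀ hc]; linarith
      have hpA : p ∈ A := by
        simp only [hA, Set.mem_preimage, Set.mem_Iic]
        exact_mod_cast hpN.trans (Nat.le_ceil _)
      have hqA : q ∈ A := by
        simp only [hA, Set.mem_preimage, Set.mem_Iic]
        exact_mod_cast hqN.trans (Nat.le_ceil _)
      exact Set.mem_biUnion hpA (Set.mem_biUnion hqA heq)
    -- finish: finite sets have no accumulation points
    rw [accPt_iff_nhds] at hacc
    have hfin2 : ((T \ {z}) : Set ℂ).Finite := hTfin.diff
    have hclosed : IsClosed (T \ {z}) := hfin2.isClosed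
    have hzUn : z ∈ (T \ {z})ᶜ := by simp
    have hU : (T \ {z})ᶜ ∩ Metric.ball z 1 ∈ 𝓝 z :=
      Filter.inter_mem (hclosed.isOpen_compl.mem_nhds hzUn) (Metric.ball_mem_nhds z one_pos)
    obtain ⟨y, ⟨⟨hyc, hyb⟩, hyS⟩, hyz⟩ := hacc _ hU
    exact hyc ⟨hkey ⟨hyS, hyb⟩, hyz⟩
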